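/- arXiv:1701.03444 — 2 statements merged into one kernel-verified Lean document; each statement's English description precedes it below -/
import Mathlib

section
/- If g : [0,T] → ℝ^d is measurable with ‖g‖_{L^p([0,T])} < ∞ for some p ∈ [2,∞), and τ_j ~ U(0,1) are independent, then each summand of the randomized Riemann sum error is centered: for every j, E[∫_{t_{j-1}}^{t_j} (g(s) - g(t_{j-1} + h τ_j)) ds] = 0, and the partial sums E^n = ∫_0^{t_n} g(s) ds - Q^n_{τ,h}[g] form a discrete-time L^p-martingale. -/
/-!
Since `t_{j-1} + h τ_j` is uniform on the cell `(t_{j-1}, t_j)`, the value `h g(t_{j-1} + h τ_j)`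
is an unbiased `L^p` estimator of `∫_{t_{j-1}}^{t_j} g`, so each local error is centered. The
error `E^n` is the sum of the first `n` local errors, the `j`-th being a function of `τ_j` alone;
by independence the increment `E^{n+1} - E^n` is independent of `σ(τ_0, …, τ_n)`, hence has
zero conditional expectation. The process is stopped at `N` because later cells leave `[0, T]`,
where `g` need not be integrable.
-/

open MeasureTheory ProbabilityTheory Set Finset
open scoped ENNReal

theorem Real.map_volume_const_add_mul (a : ℝ) {h : ℝ} (hh : 0 < h) :
    Measure.map (fun x => a + h * x) volume = (ENNReal.ofReal h)⁻¹ • volume := by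
  rw [show (fun x : ℝ => a + h * x) = (a + ·) ∘ (h * ·) from rfl,
    ← Measure.map_map (measurable_const_add a) (measurable_const_mul h),
    Real.map_volume_mul_left hh.ne', Measure.map_smul, map_add_left_eq_self,
    abs_of_pos (inv_pos.2 hh), ENNReal.ofReal_inv_of_pos hh]

namespace MeasureTheory.pdf.IsUniform

section General

variable {Ω E F : Type*} [MeasurableSpace Ω] [MeasurableSpace E] {μ : Measure Ω}
  {ν : Measure E} [NormedAddCommGroup F] {X : Ω → E} {s : Set E}

theorem integral_comp [NormedSpace ℝ F] (hX : AEMeasurable X μ) (hu : IsUniform X s μ ν)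
    {g : E → F} (hg : AEStronglyMeasurable g (ν.restrict s)) :
    ∫ ω, g (X ω) ∂μ = (ν.real s)⁻¹ • ∫ x in s, g x ∂ν := by
  have hg' : AEStronglyMeasurable g (Measure.map X μ) := by
    rw [hu]; exact hg.smul_measure _
  rw [← integral_map hX hg', hu, ProbabilityTheory.cond, integral_smul_measure,
    ENNReal.toReal_inv, measureReal_def]

theorem memLp_comp (hX : AEMeasurable X μ) (hu : IsUniform X s μ ν) (hs : ν s ≠ 0)
    {g : E → F} {p : ℝ≥0∞} (hg : MemLp g p (ν.restrict s)) :
    MemLp (fun ω => g (X ω)) p μ := by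
  have hg' : MemLp g p (Measure.map X μ) := by
    rw [hu]; exact hg.smul_measure (ENNReal.inv_ne_top.2 hs)
  exact (memLp_map_measure_iff hg'.aestronglyMeasurable hX).1 hg'

end General

section Real

variable {Ω F : Type*} [MeasurableSpace Ω] {μ : Measure Ω} [NormedAddCommGroup F]
  [NormedSpace ℝ F] {X : Ω → ℝ}

theorem const_add_mul {b c : ℝ} (hbc : b < c) (hu : IsUniform X (Ioo b c) μ) (a : ℝ) {h : ℝ}
    (hh : 0 < h) : IsUniform (fun ω => a + h * X ω) (Ioo (a + h * b) (a + h * c)) μ := by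
  have hf : Measurable fun x : ℝ => a + h * x := (measurable_const_mul h).const_add a
  have hpre : (fun x : ℝ => a + h * x) ⁻¹' Ioo (a + h * b) (a + h * c) = Ioo b c := by
    ext x; simp [mul_lt_mul_iff_right₀ hh]
  have hX : AEMeasurable X μ := hu.aemeasurable (by simp [hbc]) (by simp)
  unfold IsUniform at hu ⊢
  change Measure.map ((fun x => a + h * x) ∘ X) μ = _
  rw [← AEMeasurable.map_map_of_aemeasurable hf.aemeasurable hX, hu, ProbabilityTheory.cond,
    ProbabilityTheory.cond, Measure.map_smul, ← hpre,
    ← Measure.restrict_map hf measurableSet_Ioo, Real.map_volume_const_add_mul a hh,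
    Measure.restrict_smul, smul_smul, hpre, Real.volume_Ioo, Real.volume_Ioo,
    ← ENNReal.mul_inv (by simp) (by simp), ← ENNReal.ofReal_mul (sub_pos.2 hbc).le]
  congr 3
  ring

theorem smul_integral_comp {a b : ℝ} (hab : a < b) (hu : IsUniform X (Ioo a b) μ) {g : ℝ → F}
    (hg : AEStronglyMeasurable g (volume.restrict (Ioo a b))) :
    (b - a) • ∫ ω, g (X ω) ∂μ = ∫ x in Ioc a b, g x := by
  rw [hu.integral_comp (hu.aemeasurable (by simp [hab]) (by simp)) hg,
    Real.volume_real_Ioo_of_le hab.le, smul_smul, mul_inv_cancel₀ (sub_pos.2 hab).ne', one_smul,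
    integral_Ioc_eq_integral_Ioo]

end Real

end MeasureTheory.pdf.IsUniform

section RiemannCell

variable {F : Type*} [NormedAddCommGroup F] [NormedSpace ℝ F]

theorem integral_Ioc_zero_nat_mul_eq_sum {g : ℝ → F} {h : ℝ} (hh : 0 ≤ h) {n : ℕ}
    (hg : IntegrableOn g (Ioc 0 (n * h))) :
    ∫ s in Ioc 0 ((n : ℝ) * h), g s
      = ∑ j ∈ range n, ∫ s in Ioc ((j : ℝ) * h) (j * h + h), g s := by
  have hcell : ∀ k : ℕ, (k : ℝ) * h ≤ k * h + h := fun k => by linarith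
  have hpieces : ∀ k < n, IntervalIntegrable g volume (k * h) ((k + 1 : ℕ) * h) :=
    fun k hk => by
      rw [Nat.cast_succ, add_one_mul]
      refine (intervalIntegrable_iff_integrableOn_Ioc_of_le (hcell k)).2
        (hg.mono_set (Ioc_subset_Ioc (by positivity) ?_))
      rw [← add_one_mul]
      gcongr
      exact_mod_cast hk
  have hsum := intervalIntegral.sum_integral_adjacent_intervals hpieces
  simp only [Nat.cast_zero, zero_mul, Nat.cast_succ, add_one_mul] at hsum
  rw [← intervalIntegral.integral_of_le (by positivity), ← hsum]
  exact sum_congr rfl fun k _ => intervalIntegral.integral_of_le (hcell k)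

/-- The `j`-th summand of `E^n` is `riemannCellError g t_{j-1} h τ_j`. -/
noncomputable def riemannCellError (g : ℝ → F) (a h x : ℝ) : F :=
  (∫ s in Ioc a (a + h), g s) - h • g (a + h * x)

theorem MeasureTheory.StronglyMeasurable.riemannCellError {g : ℝ → F}
    (hg : StronglyMeasurable g) (a h : ℝ) : StronglyMeasurable (riemannCellError g a h) :=
  stronglyMeasurable_const.sub
    ((hg.comp_measurable ((measurable_const_mul h).const_add a)).const_smul h)

theorem integral_Ioc_sub_smul_sum_eq_sum_riemannCellError {g : ℝ → F} {h : ℝ} (hh : 0 ≤ h)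
    {n : ℕ} (hg : IntegrableOn g (Ioc 0 (n * h))) (x : ℕ → ℝ) :
    (∫ s in Ioc 0 ((n : ℝ) * h), g s) - h • ∑ j ∈ range n, g ((j : ℝ) * h + h * x j)
      = ∑ j ∈ range n, riemannCellError g (j * h) h (x j) := by
  rw [integral_Ioc_zero_nat_mul_eq_sum hh hg, smul_sum, ← sum_sub_distrib]
  rfl

variable {Ω : Type*} [MeasurableSpace Ω] {μ : Measure Ω} {X : Ω → ℝ} {g : ℝ → F}
  {a h : ℝ}

theorem memLp_riemannCellError [IsFiniteMeasure μ] (hu : pdf.IsUniform X (Ioo 0 1) μ)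
    (hh : 0 < h) {p : ℝ≥0∞} (hg : MemLp g p (volume.restrict (Ioc a (a + h)))) :
    MemLp (fun ω => riemannCellError g a h (X ω)) p μ := by
  have hY : pdf.IsUniform (fun ω => a + h * X ω) (Ioo a (a + h)) μ := by
    simpa using hu.const_add_mul zero_lt_one a hh
  refine (memLp_const _).sub (MemLp.const_smul ?_ h)
  exact hY.memLp_comp (hY.aemeasurable (by simp [hh]) (by simp)) (by simp [hh])
    (hg.mono_measure (Measure.restrict_mono_set _ Ioo_subset_Ioc_self))

theorem integral_riemannCellError_eq_zero [CompleteSpace F] [IsProbabilityMeasure μ]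
    (hu : pdf.IsUniform X (Ioo 0 1) μ) (hh : 0 < h) (hg : IntegrableOn g (Ioc a (a + h))) :
    ∫ ω, riemannCellError g a h (X ω) ∂μ = 0 := by
  have hY : pdf.IsUniform (fun ω => a + h * X ω) (Ioo a (a + h)) μ := by
    simpa using hu.const_add_mul zero_lt_one a hh
  have hg' : IntegrableOn g (Ioo a (a + h)) := hg.mono_set Ioo_subset_Ioc_self
  have hint : Integrable (fun ω => h • g (a + h * X ω)) μ :=
    (memLp_one_iff_integrable.1 <| hY.memLp_comp (hY.aemeasurable (by simp [hh]) (by simp))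
      (by simp [hh]) (memLp_one_iff_integrable.2 hg')).smul h
  have hunbiased := hY.smul_integral_comp (by linarith) hg'.aestronglyMeasurable
  rw [add_sub_cancel_left] at hunbiased
  simp only [riemannCellError]
  rw [integral_sub (integrable_const _) hint, integral_const, probReal_univ, one_smul,
    integral_smul, hunbiased, sub_self]

end RiemannCell

theorem martingale_sum_range_min_of_iIndepFun {Ω β E : Type*} {m : MeasurableSpace Ω}
    {μ : Measure Ω} [NormedAddCommGroup β] [MeasurableSpace β] [BorelSpace β]
    [NormedAddCommGroup E] [NormedSpace ℝ E] [CompleteSpace E] {τ : ℕ → Ω → β}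
    (hτ : ∀ j, StronglyMeasurable (τ j)) (hind : iIndepFun τ μ) {ξ : ℕ → β → E}
    (hξ : ∀ j, StronglyMeasurable (ξ j)) (N : ℕ)
    (hint : ∀ j < N, Integrable (fun ω => ξ j (τ (j + 1) ω)) μ)
    (hmean : ∀ j < N, ∫ ω, ξ j (τ (j + 1) ω) ∂μ = 0) :
    Martingale (fun n ω => ∑ j ∈ range (min n N), ξ j (τ (j + 1) ω))
      (Filtration.natural τ hτ) μ := by
  have := hind.isProbabilityMeasure
  set ℱ := Filtration.natural τ hτ
  refine martingale_of_condExp_sub_eq_zero_nat (fun n => ?_) (fun n => ?_) (fun i => ?_)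
  · refine Finset.stronglyMeasurable_fun_sum _ fun j hj => (hξ j).comp_measurable ?_
    have hjn : j + 1 ≤ n := by have := mem_range.1 hj; omega
    exact ((Filtration.stronglyAdapted_natural hτ (j + 1)).mono (ℱ.mono hjn)).measurable
  · exact integrable_finsetSum _ fun j hj => hint j (by have := mem_range.1 hj; omega)
  by_cases hi : i < N
  · have hincr : (fun ω => ∑ j ∈ range (min (i + 1) N), ξ j (τ (j + 1) ω))
        - (fun ω => ∑ j ∈ range (min i N), ξ j (τ (j + 1) ω))
        = fun ω => ξ i (τ (i + 1) ω) := by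
      ext ω
      rw [Pi.sub_apply, min_eq_left hi, min_eq_left hi.le, sum_range_succ, add_sub_cancel_left]
    rw [hincr]
    refine (condExp_indep_eq (hτ (i + 1)).measurable.comap_le (ℱ.le i)
      ((hξ i).comp_measurable (comap_measurable (τ (i + 1))))
      (hind.indep_comap_natural_of_lt hτ (Nat.lt_succ_self i))).trans ?_
    exact .of_eq (funext fun _ => hmean i hi)
  · rw [min_eq_right (by omega : N ≤ i + 1), min_eq_right (not_lt.1 hi), sub_self, condExp_zero]

theorem randomized_riemann_error_is_Lp_martingale_general
    {Ω : Type*} [MeasureSpace Ω] [IsProbabilityMeasure (ℙ : Measure Ω)]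
    {d : ℕ} (T : ℝ) (p : ℝ) (hp : 2 ≤ p)
    (g : ℝ → EuclideanSpace ℝ (Fin d)) (hgmeas : Measurable g)
    (hgp : MemLp g (ENNReal.ofReal p) (volume.restrict (Set.Icc (0:ℝ) T)))
    (τ : ℕ → Ω → ℝ) (hτmeas : ∀ j, Measurable (τ j))
    (hτindep : iIndepFun τ ℙ)
    (hτunif : ∀ j, pdf.IsUniform (τ j) (Set.Ioo (0:ℝ) 1) ℙ volume)
    (h : ℝ) (hh0 : 0 < h)
    (N : ℕ) (hN : (N : ℝ) * h ≤ T)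
    (E : ℕ → Ω → EuclideanSpace ℝ (Fin d))
    (hE : ∀ n, E n = fun ω =>
      (∫ s in Set.Ioc (0:ℝ) ((n : ℝ) * h), g s)
        - h • ∑ j ∈ Finset.range n, g ((j : ℝ) * h + h * τ (j + 1) ω)) :
    (∀ j : ℕ, j + 1 ≤ N →
      ∫ ω, ((∫ s in Set.Ioc ((j : ℝ) * h) (((j : ℝ) + 1) * h), g s)
        - h • g ((j : ℝ) * h + h * τ (j + 1) ω)) ∂ℙ = 0) ∧
    (∀ n, n ≤ N → MemLp (E n) (ENNReal.ofReal p) ℙ) ∧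
    (∃ ℱ : Filtration ℕ (inferInstance : MeasurableSpace Ω),
      Martingale (fun n => E (min n N)) ℱ ℙ) := by
  have hp1 : 1 ≤ ENNReal.ofReal p := ENNReal.one_le_ofReal.2 (by linarith)
  have hgcell : ∀ j : ℕ, j + 1 ≤ N →
      MemLp g (ENNReal.ofReal p) (volume.restrict (Ioc ((j : ℝ) * h) (j * h + h))) := by
    intro j hj
    have hjN : ((j : ℝ) + 1) * h ≤ N * h := by gcongr; exact_mod_cast hj
    exact hgp.mono_measure (Measure.restrict_mono_set _ (Ioc_subset_Icc_self.trans
      (Icc_subset_Icc (by positivity) (by linarith))))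
  have hcentered : ∀ j : ℕ, j + 1 ≤ N →
      ∫ ω, riemannCellError g (j * h) h (τ (j + 1) ω) ∂ℙ = 0 := fun j hj =>
    integral_riemannCellError_eq_zero (hτunif _) hh0 ((hgcell j hj).integrable hp1)
  have hEsum : ∀ n ≤ N,
      E n = fun ω => ∑ j ∈ range n, riemannCellError g (j * h) h (τ (j + 1) ω) := by
    intro n hn
    have hnT : (n : ℝ) * h ≤ T := le_trans (by gcongr) hN
    rw [hE n]
    exact funext fun ω => integral_Ioc_sub_smul_sum_eq_sum_riemannCellError hh0.le
      (IntegrableOn.mono_set (hgp.integrable hp1)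
        (Ioc_subset_Icc_self.trans (Icc_subset_Icc le_rfl hnT))) _
  refine ⟨fun j hj => by simpa only [riemannCellError, add_one_mul] using hcentered j hj,
    fun n hn => hEsum n hn ▸ memLp_finsetSum _ fun j hj =>
      memLp_riemannCellError (hτunif _) hh0 (hgcell j (by have := mem_range.1 hj; omega)),
    Filtration.natural τ fun j => (hτmeas j).stronglyMeasurable, ?_⟩
  rw [show (fun n => E (min n N)) = fun n ω => ∑ j ∈ range (min n N),
      riemannCellError g (j * h) h (τ (j + 1) ω) from funext fun n => hEsum _ (min_le_right _ _)]
  exact martingale_sum_range_min_of_iIndepFun _ hτindep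
    (fun j => hgmeas.stronglyMeasurable.riemannCellError _ _) N
    (fun j hj => (memLp_riemannCellError (hτunif _) hh0 (hgcell j hj)).integrable hp1) hcentered

/-- Each summand of the randomized Riemann sum error is centered, and the partial-sum
error process `E^n = ∫_0^{t_n} g − Q^n_{τ,h}[g]` is a discrete-time `L^p`-martingale
(with respect to some filtration). -/
theorem randomized_riemann_error_is_Lp_martingale
    {Ω : Type*} [MeasureSpace Ω] [IsProbabilityMeasure (ℙ : Measure Ω)]
    {d : ℕ} (T : ℝ) (hT : 0 < T) (p : ℝ) (hp : 2 ≤ p)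
    (g : ℝ → EuclideanSpace ℝ (Fin d)) (hgmeas : Measurable g)
    (hgp : MemLp g (ENNReal.ofReal p) (volume.restrict (Set.Icc (0:ℝ) T)))
    (τ : ℕ → Ω → ℝ) (hτmeas : ∀ j, Measurable (τ j))
    (hτindep : iIndepFun τ ℙ)
    (hτunif : ∀ j, pdf.IsUniform (τ j) (Set.Ioo (0:ℝ) 1) ℙ volume)
    (h : ℝ) (hh0 : 0 < h) (hh1 : h < 1)
    (N : ℕ) (hN : (N : ℝ) * h ≤ T) (hN' : T < ((N : ℝ) + 1) * h)
    (E : ℕ → Ω → EuclideanSpace ℝ (Fin d))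
    (hE : ∀ n, E n = fun ω =>
      (∫ s in Set.Ioc (0:ℝ) ((n : ℝ) * h), g s)
        - h • ∑ j ∈ Finset.range n, g ((j : ℝ) * h + h * τ (j + 1) ω)) :
    (∀ j : ℕ, j + 1 ≤ N →
      ∫ ω, ((∫ s in Set.Ioc ((j : ℝ) * h) (((j : ℝ) + 1) * h), g s)
        - h • g ((j : ℝ) * h + h * τ (j + 1) ω)) ∂ℙ = 0) ∧
    (∀ n, n ≤ N → MemLp (E n) (ENNReal.ofReal p) ℙ) ∧
    (∃ ℱ : Filtration ℕ (inferInstance : MeasurableSpace Ω),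
      Martingale (fun n => E (min n N)) ℱ ℙ) :=
  randomized_riemann_error_is_Lp_martingale_general T p hp g hgmeas hgp τ hτmeas hτindep hτunif h
    hh0 N hN E hE
end

section
/- Equivalent reformulation of the Borel–Cantelli step-size lemma: under the hypotheses p ∈ [1,∞), ρ > 1/p, ∑_m h_m < ∞, and sup_m h_m^{−ρ}‖X_m‖_{L^p(Ω)} < ∞, there exist a set A of probability one and a nonnegative random variable M ∈ L^p(Ω;ℝ) such that |X_m(ω)| ≤ M(ω) h_m^{ρ − 1/p} for all m ∈ ℕ and all ω ∈ A. -/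
/-!
With `Y_m := h_m^{-(ρ - 1/p)} X_m` one has `‖Y_m‖_p^p ≤ B^p h_m`, which is summable. Hence
`M := (∑ₘ ‖Y_m‖^p)^{1/p}` satisfies `E[M^p] = ∑ₘ ‖Y_m‖_p^p < ∞` by monotone convergence, and
trivially `‖Y_m‖ ≤ M` pointwise.
-/

open MeasureTheory ProbabilityTheory Real

open scoped ENNReal

namespace MeasureTheory

variable {Ω E : Type*} [MeasurableSpace Ω] {μ : Measure Ω} [NormedAddCommGroup E] {p : ℝ}

lemma lintegral_tsum_rpow_enorm (hp : 0 < p) {Y : ℕ → Ω → E}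
    (hY : ∀ m, AEStronglyMeasurable (Y m) μ) :
    ∫⁻ ω, ∑' m, ‖Y m ω‖ₑ ^ p ∂μ = ∑' m, eLpNorm (Y m) (.ofReal p) μ ^ p := by
  rw [lintegral_tsum fun m => (hY m).enorm.pow_const p]
  congr 1 with m
  rw [eLpNorm_eq_eLpNorm' (by simpa using hp) ENNReal.ofReal_ne_top, ENNReal.toReal_ofReal hp.le,
    lintegral_rpow_enorm_eq_rpow_eLpNorm' hp]

lemma memLp_toReal_of_lintegral_rpow_ne_top (hp : 0 < p) {G : Ω → ℝ≥0∞}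
    (hG : AEMeasurable G μ) (hint : ∫⁻ ω, G ω ^ p ∂μ ≠ ∞) :
    MemLp (fun ω => (G ω).toReal) (.ofReal p) μ := by
  refine ⟨hG.ennreal_toReal.aestronglyMeasurable, ?_⟩
  rw [eLpNorm_lt_top_iff_lintegral_rpow_enorm_lt_top (by simpa using hp) ENNReal.ofReal_ne_top,
    ENNReal.toReal_ofReal hp.le]
  refine lt_of_le_of_lt (lintegral_mono fun ω => ?_) hint.lt_top
  gcongr
  rw [Real.enorm_eq_ofReal ENNReal.toReal_nonneg]
  exact ENNReal.ofReal_toReal_le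

theorem exists_memLp_forall_norm_le_of_tsum_eLpNorm_rpow_ne_top (hp : 0 < p)
    {Y : ℕ → Ω → E} (hY : ∀ m, AEStronglyMeasurable (Y m) μ)
    (hsum : ∑' m, eLpNorm (Y m) (.ofReal p) μ ^ p ≠ ∞) :
    ∃ M : Ω → ℝ, MemLp M (.ofReal p) μ ∧ (∀ ω, 0 ≤ M ω) ∧ ∀ᵐ ω ∂μ, ∀ m, ‖Y m ω‖ ≤ M ω := by
  set S : Ω → ℝ≥0∞ := fun ω => ∑' m, ‖Y m ω‖ₑ ^ p
  have hS : AEMeasurable S μ := AEMeasurable.tsum fun m => (hY m).enorm.pow_const p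
  have hS_int : ∫⁻ ω, S ω ∂μ ≠ ∞ := by rwa [lintegral_tsum_rpow_enorm hp hY]
  refine ⟨fun ω => (S ω ^ p⁻¹).toReal, memLp_toReal_of_lintegral_rpow_ne_top hp (hS.pow_const _) ?_,
    fun _ => ENNReal.toReal_nonneg, ?_⟩
  · simpa [← ENNReal.rpow_mul, inv_mul_cancel₀ hp.ne'] using hS_int
  · filter_upwards [ae_lt_top' hS hS_int] with ω hω m
    have hle : ‖Y m ω‖ₑ ≤ S ω ^ p⁻¹ := (ENNReal.le_rpow_inv_iff hp).2 (ENNReal.le_tsum m)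
    simpa using ENNReal.toReal_mono (ENNReal.rpow_ne_top_of_nonneg (by positivity) hω.ne) hle

lemma eLpNorm_inv_rpow_smul_rpow_le [NormedSpace ℝ E] (hp : 0 < p) {f : Ω → E} {B t ρ : ℝ}
    (ht : 0 < t) (hf : eLpNorm f (.ofReal p) μ ≠ ∞)
    (hB : (eLpNorm f (.ofReal p) μ).toReal ≤ B * t ^ ρ) :
    eLpNorm ((t ^ (ρ - 1 / p))⁻¹ • f) (.ofReal p) μ ^ p ≤ .ofReal (B ^ p * t) := by
  set N := (eLpNorm f (.ofReal p) μ).toReal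
  have hc : 0 < (t ^ (ρ - 1 / p))⁻¹ := inv_pos.2 (rpow_pos_of_pos ht _)
  have hB0 : 0 ≤ B := nonneg_of_mul_nonneg_left (ENNReal.toReal_nonneg.trans hB)
    (rpow_pos_of_pos ht ρ)
  have hscale : (t ^ (ρ - 1 / p))⁻¹ * (B * t ^ ρ) = B * t ^ (1 / p) := by
    rw [← rpow_neg ht.le, mul_left_comm, ← rpow_add ht]
    ring_nf
  calc eLpNorm ((t ^ (ρ - 1 / p))⁻¹ • f) (.ofReal p) μ ^ p
      = .ofReal (((t ^ (ρ - 1 / p))⁻¹ * N) ^ p) := by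
        rw [eLpNorm_const_smul, ← ENNReal.ofReal_toReal hf, Real.enorm_eq_ofReal hc.le,
          ← ENNReal.ofReal_mul hc.le, ENNReal.ofReal_rpow_of_nonneg (by positivity) hp.le]
    _ ≤ .ofReal ((B * t ^ (1 / p)) ^ p) := by
        rw [← hscale]
        gcongr
    _ = .ofReal (B ^ p * t) := by
        rw [mul_rpow hB0 (by positivity), ← rpow_mul ht.le, one_div_mul_cancel hp.ne', rpow_one]

end MeasureTheory

theorem borel_cantelli_stepsize_reformulated_general
    {Ω : Type*} [MeasureSpace Ω]
    {d : ℕ} (p : ℝ) (hp : 1 ≤ p) (ρ : ℝ)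
    (h : ℕ → ℝ) (hh : ∀ m, 0 < h m ∧ h m < 1) (hsum : Summable h)
    (X : ℕ → Ω → EuclideanSpace ℝ (Fin d))
    (hX : ∀ m, MemLp (X m) (ENNReal.ofReal p) ℙ)
    (hbound : ∃ B : ℝ, ∀ m,
      (eLpNorm (X m) (ENNReal.ofReal p) ℙ).toReal ≤ B * h m ^ ρ) :
    ∃ M : Ω → ℝ, MemLp M (ENNReal.ofReal p) ℙ ∧ (∀ ω, 0 ≤ M ω) ∧
      ∀ᵐ ω ∂ℙ, ∀ m : ℕ, ‖X m ω‖ ≤ M ω * h m ^ (ρ - 1 / p) := by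
  obtain ⟨B, hB⟩ := hbound
  have hp0 : 0 < p := by linarith
  have hY_sum : ∑' m, eLpNorm ((h m ^ (ρ - 1 / p))⁻¹ • X m) (.ofReal p) ℙ ^ p ≠ ∞ :=
    ne_top_of_le_ne_top (hsum.mul_left (B ^ p)).tsum_ofReal_ne_top <| ENNReal.tsum_le_tsum
      fun m => eLpNorm_inv_rpow_smul_rpow_le hp0 (hh m).1 (hX m).2.ne (hB m)
  obtain ⟨M, hM, hM0, hYM⟩ := exists_memLp_forall_norm_le_of_tsum_eLpNorm_rpow_ne_top hp0
    (fun m => (hX m).1.const_smul _) hY_sum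
  refine ⟨M, hM, hM0, ?_⟩
  filter_upwards [hYM] with ω hω m
  have hpos : 0 < h m ^ (ρ - 1 / p) := rpow_pos_of_pos (hh m).1 _
  have hYm := hω m
  rwa [Pi.smul_apply, norm_smul, norm_inv, norm_of_nonneg hpos.le, inv_mul_le_iff₀ hpos,
    mul_comm] at hYm

/-- Reformulation of the Borel–Cantelli step-size lemma: under the same hypotheses there
exist a full-measure event and a nonnegative random variable `M ∈ L^p(Ω;ℝ)` such that
`|X_m(ω)| ≤ M(ω) h_m^{ρ−1/p}` for all `m` and almost all `ω`. -/
theorem borel_cantelli_stepsize_reformulated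
    {Ω : Type*} [MeasureSpace Ω] [IsProbabilityMeasure (ℙ : Measure Ω)]
    {d : ℕ} (p : ℝ) (hp : 1 ≤ p) (ρ : ℝ) (hρ : 1 / p < ρ)
    (h : ℕ → ℝ) (hh : ∀ m, 0 < h m ∧ h m < 1) (hsum : Summable h)
    (X : ℕ → Ω → EuclideanSpace ℝ (Fin d))
    (hX : ∀ m, MemLp (X m) (ENNReal.ofReal p) ℙ)
    (hbound : ∃ B : ℝ, ∀ m,
      (eLpNorm (X m) (ENNReal.ofReal p) ℙ).toReal ≤ B * h m ^ ρ) :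
    ∃ M : Ω → ℝ, MemLp M (ENNReal.ofReal p) ℙ ∧ (∀ ω, 0 ≤ M ω) ∧
      ∀ᵐ ω ∂ℙ, ∀ m : ℕ, ‖X m ω‖ ≤ M ω * h m ^ (ρ - 1 / p) :=
  borel_cantelli_stepsize_reformulated_general p hp ρ h hh hsum X hX hbound
end
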